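/- arXiv:1702.00244 — 2 statements merged into one kernel-verified Lean document; each statement's English description precedes it below -/
import Mathlib

section
/- Let (B,E,s) be an extriangulated category, let A --x--> B --y--> C --δ--> be an E-triangle, let f: A → D be any morphism, and let D --d--> E --e--> C --(f_*δ)--> be any E-triangle realizing f_*δ. Then there exists a morphism g: B → E such that (f, g, id_C) is a morphism of E-triangles from (x, y, δ) to (d, e, f_*δ), and moreover the sequence A --[-f, x]^T--> D ⊕ B --[d, g]--> E together with e^*δ is an E-triangle. -/
namespace ExtriHearts

open CategoryTheory CategoryTheory.Limits Opposite

attribute [local instance] CategoryTheory.Limits.hasBinaryBiproducts_of_finite_biproducts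

universe v u v₂ u₂

section IdealQuotient

variable {D : Type u₂} [Category.{v₂} D] [Preadditive D]

/-- The subgroup of morphisms `X ⟶ Y` generated by those factoring through an object of `W`. -/
def wIdeal (W : Set D) (X Y : D) : AddSubgroup (X ⟶ Y) :=
  AddSubgroup.closure {f : X ⟶ Y | ∃ Z ∈ W, ∃ p : X ⟶ Z, ∃ q : Z ⟶ Y, f = p ≫ q}

/-- The hom relation on `D` identifying morphisms whose difference lies in the ideal
generated by morphisms factoring through an object of `W`.  (For an additively closed
subcategory `W` this is the usual relation "`f - g` factors through an object of `W`".) -/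
def wRel (W : Set D) : HomRel D := fun {X Y} f g => f - g ∈ wIdeal W X Y

lemma comp_left_mem_wIdeal (W : Set D) {X Y Z : D} (f : X ⟶ Y) {g : Y ⟶ Z}
    (hg : g ∈ wIdeal W Y Z) : f ≫ g ∈ wIdeal W X Z := by
  have hle : wIdeal W Y Z ≤ (wIdeal W X Z).comap (Preadditive.leftComp Z f) := by
    rw [wIdeal, AddSubgroup.closure_le]
    rintro g ⟨Z₀, hZ₀, p, q, rfl⟩
    exact AddSubgroup.subset_closure ⟨Z₀, hZ₀, f ≫ p, q, by
      simp [Preadditive.leftComp]⟩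
  simpa [Preadditive.leftComp] using hle hg

lemma comp_right_mem_wIdeal (W : Set D) {X Y Z : D} {f : X ⟶ Y} (g : Y ⟶ Z)
    (hf : f ∈ wIdeal W X Y) : f ≫ g ∈ wIdeal W X Z := by
  have hle : wIdeal W X Y ≤ (wIdeal W X Z).comap (Preadditive.rightComp X g) := by
    rw [wIdeal, AddSubgroup.closure_le]
    rintro f ⟨Z₀, hZ₀, p, q, rfl⟩
    exact AddSubgroup.subset_closure ⟨Z₀, hZ₀, p, q ≫ g, by
      simp [Preadditive.rightComp]⟩
  simpa [Preadditive.rightComp] using hle hf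

instance wRel_congruence (W : Set D) : Congruence (wRel W) where
  equivalence :=
    { refl := fun f => by
        show f - f ∈ wIdeal W _ _
        simp only [sub_self]
        exact zero_mem _
      symm := fun {f g} h => by
        have h' : f - g ∈ wIdeal W _ _ := h
        show g - f ∈ wIdeal W _ _
        simpa only [neg_sub] using neg_mem h'
      trans := fun {f g h} h₁ h₂ => by
        have h₁' : f - g ∈ wIdeal W _ _ := h₁
        have h₂' : g - h ∈ wIdeal W _ _ := h₂
        show f - h ∈ wIdeal W _ _
        simpa only [sub_add_sub_cancel] using add_mem h₁' h₂' }
  comp_left := fun {X Y Z} f {g g'} h => by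
    have h' : g - g' ∈ wIdeal W _ _ := h
    show f ≫ g - f ≫ g' ∈ wIdeal W _ _
    simpa only [← Preadditive.comp_sub] using comp_left_mem_wIdeal W f h'
  comp_right := fun {X Y Z} {f f'} g h => by
    have h' : f - f' ∈ wIdeal W _ _ := h
    show f ≫ g - f' ≫ g ∈ wIdeal W _ _
    simpa only [← Preadditive.sub_comp] using comp_right_mem_wIdeal W g h'

/-- The quotient of a preadditive category by (the ideal generated by) the morphisms factoring
through a class of objects `W`. -/
abbrev QuotCat (W : Set D) := CategoryTheory.Quotient (wRel W)

/-- The canonical quotient functor. -/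
abbrev toQuot (W : Set D) : D ⥤ QuotCat W := Quotient.functor _

instance quotCatPreadditive (W : Set D) : Preadditive (QuotCat W) :=
  Quotient.preadditive _ (fun X Y f₁ f₂ g₁ g₂ h₁ h₂ => by
    have h₁' : f₁ - f₂ ∈ wIdeal W X Y := h₁
    have h₂' : g₁ - g₂ ∈ wIdeal W X Y := h₂
    show f₁ + g₁ - (f₂ + g₂) ∈ wIdeal W X Y
    have heq : f₁ + g₁ - (f₂ + g₂) = f₁ - f₂ + (g₁ - g₂) := by abel
    rw [heq]
    exact add_mem h₁' h₂')

end IdealQuotient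

section ExtCat

/-- The data of an additive `Ab`-valued bifunctor together with a realization predicate:
`realize δ x y` means that the 3-term sequence `A --x--> X --y--> C` realizes the
`E`-extension `δ ∈ E(C,A)`, i.e. belongs to the equivalence class `s(δ)`. -/
structure PreExtStruct (B : Type u) [Category.{v} B] [Preadditive B] where
  /-- The additive bifunctor `E : Bᵒᵖ × B → Ab`. -/
  E : Bᵒᵖ ⥤ B ⥤ AddCommGrpCat.{v}

namespace PreExtStruct

variable {B : Type u} [Category.{v} B] [Preadditive B]

/-- The abelian group `E(C,A)` of `E`-extensions of `C` by `A`. -/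
abbrev Ext (σ : PreExtStruct B) (C A : B) : AddCommGrpCat.{v} := (σ.E.obj (op C)).obj A

/-- `a_* δ`, the pushforward of an `E`-extension along `a : A ⟶ A'`. -/
def push (σ : PreExtStruct B) {C A A' : B} (a : A ⟶ A') (δ : σ.Ext C A) : σ.Ext C A' :=
  (σ.E.obj (op C)).map a δ

/-- `c^* δ`, the pullback of an `E`-extension along `c : C' ⟶ C`. -/
def pull (σ : PreExtStruct B) {C' C A : B} (c : C' ⟶ C) (δ : σ.Ext C A) : σ.Ext C' A :=
  (σ.E.map c.op).app A δ

/-- The direct sum `δ ⊕ δ'` of two `E`-extensions, i.e. the element of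
`E(C ⊞ C', A ⊞ A')` corresponding to `(δ, 0, 0, δ')`. -/
noncomputable def sumExt (σ : PreExtStruct B) [HasBinaryBiproducts B] {C C' A A' : B}
    (δ : σ.Ext C A) (δ' : σ.Ext C' A') : σ.Ext (C ⊞ C') (A ⊞ A') :=
  σ.push biprod.inl (σ.pull biprod.fst δ) + σ.push biprod.inr (σ.pull biprod.snd δ')

end PreExtStruct

/-- An *extriangulated category* structure `(E, s)` on an additive category `B`, consisting of
an additive bifunctor `E : Bᵒᵖ × B → Ab` and an additive realization `s` of `E` (encoded by the
predicate `realize`), subject to the axioms (ET1), (ET2), (ET3), (ET3)ᵒᵖ, (ET4), (ET4)ᵒᵖ of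
Nakaoka–Palu. -/
structure ExtStruct (B : Type u) [Category.{v} B] [Preadditive B] [HasFiniteBiproducts B]
    extends PreExtStruct B where
  /-- (ET1) `E` is additive in the second variable. -/
  additive_fst : ∀ Cop : Bᵒᵖ, (E.obj Cop).Additive
  /-- (ET1) `E` is additive in the first variable. -/
  additive_snd : ∀ A : B, (E.flip.obj A).Additive
  /-- `realize δ x y` means the sequence `A --x--> X --y--> C` realizes `δ`, i.e. it belongs to
  the equivalence class `s(δ)`. -/
  realize : ∀ ⦃A C : B⦄, toPreExtStruct.Ext C A → ∀ ⦃X : B⦄, (A ⟶ X) → (X ⟶ C) → Prop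
  /-- Every `E`-extension is realized by some sequence. -/
  realize_ex : ∀ ⦃A C : B⦄ (δ : toPreExtStruct.Ext C A),
      ∃ (X : B) (x : A ⟶ X) (y : X ⟶ C), realize δ x y
  /-- `s(δ)` is closed under the equivalence of sequences. -/
  realize_iso : ∀ ⦃A C X X' : B⦄ (δ : toPreExtStruct.Ext C A) (x : A ⟶ X) (y : X ⟶ C)
      (b : X ≅ X'), realize δ x y → realize δ (x ≫ b.hom) (b.inv ≫ y)
  /-- Any two realizations of `δ` are equivalent sequences. -/
  realize_unique : ∀ ⦃A C X X' : B⦄ (δ : toPreExtStruct.Ext C A) (x : A ⟶ X) (y : X ⟶ C)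
      (x' : A ⟶ X') (y' : X' ⟶ C), realize δ x y → realize δ x' y' →
      ∃ b : X ≅ X', x ≫ b.hom = x' ∧ b.hom ≫ y' = y
  /-- (ET2)(∗) Any morphism of `E`-extensions is realized by a morphism of sequences. -/
  realize_map : ∀ ⦃A C A' C' X X' : B⦄ (δ : toPreExtStruct.Ext C A) (δ' : toPreExtStruct.Ext C' A')
      (x : A ⟶ X) (y : X ⟶ C) (x' : A' ⟶ X') (y' : X' ⟶ C') (a : A ⟶ A') (c : C ⟶ C'),
      realize δ x y → realize δ' x' y' →
      toPreExtStruct.push a δ = toPreExtStruct.pull c δ' →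
      ∃ b : X ⟶ X', x ≫ b = a ≫ x' ∧ y ≫ c = b ≫ y'
  /-- (ET2)(i) The split extension is realized by the split sequence. -/
  realize_zero : ∀ A C : B,
      realize (0 : toPreExtStruct.Ext C A) (biprod.inl : A ⟶ A ⊞ C) (biprod.snd : A ⊞ C ⟶ C)
  /-- (ET2)(ii) Realization is additive. -/
  realize_sum : ∀ ⦃A C A' C' X X' : B⦄ (δ : toPreExtStruct.Ext C A)
      (δ' : toPreExtStruct.Ext C' A') (x : A ⟶ X) (y : X ⟶ C) (x' : A' ⟶ X') (y' : X' ⟶ C'),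
      realize δ x y → realize δ' x' y' →
      realize (toPreExtStruct.sumExt δ δ') (biprod.map x x') (biprod.map y y')
  /-- (ET3) -/
  et3 : ∀ ⦃A C A' C' X X' : B⦄ (δ : toPreExtStruct.Ext C A) (δ' : toPreExtStruct.Ext C' A')
      (x : A ⟶ X) (y : X ⟶ C) (x' : A' ⟶ X') (y' : X' ⟶ C'),
      realize δ x y → realize δ' x' y' → ∀ (a : A ⟶ A') (b : X ⟶ X'), x ≫ b = a ≫ x' →
      ∃ c : C ⟶ C', toPreExtStruct.push a δ = toPreExtStruct.pull c δ' ∧ y ≫ c = b ≫ y'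
  /-- (ET3)ᵒᵖ -/
  et3op : ∀ ⦃A C A' C' X X' : B⦄ (δ : toPreExtStruct.Ext C A) (δ' : toPreExtStruct.Ext C' A')
      (x : A ⟶ X) (y : X ⟶ C) (x' : A' ⟶ X') (y' : X' ⟶ C'),
      realize δ x y → realize δ' x' y' → ∀ (b : X ⟶ X') (c : C ⟶ C'), y ≫ c = b ≫ y' →
      ∃ a : A ⟶ A', toPreExtStruct.push a δ = toPreExtStruct.pull c δ' ∧ x ≫ b = a ≫ x'
  /-- (ET4) -/
  et4 : ∀ ⦃A B₀ D C F : B⦄ (δ : toPreExtStruct.Ext D A) (f : A ⟶ B₀) (f' : B₀ ⟶ D)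
      (δ' : toPreExtStruct.Ext F B₀) (g : B₀ ⟶ C) (g' : C ⟶ F),
      realize δ f f' → realize δ' g g' →
      ∃ (E₀ : B) (d : D ⟶ E₀) (e : E₀ ⟶ F) (h' : C ⟶ E₀) (δ'' : toPreExtStruct.Ext E₀ A),
        g ≫ h' = f' ≫ d ∧ h' ≫ e = g' ∧
        realize δ'' (f ≫ g) h' ∧ realize (toPreExtStruct.push f' δ') d e ∧
        toPreExtStruct.pull d δ'' = δ ∧ toPreExtStruct.push f δ'' = toPreExtStruct.pull e δ'
  /-- (ET4)ᵒᵖ -/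
  et4op : ∀ ⦃F C B₀ D A : B⦄ (δ' : toPreExtStruct.Ext B₀ F) (s : F ⟶ C) (t : C ⟶ B₀)
      (δ : toPreExtStruct.Ext A D) (u : D ⟶ B₀) (v : B₀ ⟶ A),
      realize δ' s t → realize δ u v →
      ∃ (E₀ : B) (e : F ⟶ E₀) (d : E₀ ⟶ D) (m : E₀ ⟶ C) (δ'' : toPreExtStruct.Ext A E₀),
        m ≫ t = d ≫ u ∧ e ≫ m = s ∧
        realize δ'' m (t ≫ v) ∧ realize (toPreExtStruct.pull u δ') e d ∧
        toPreExtStruct.push d δ'' = δ ∧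
        toPreExtStruct.pull v δ'' = toPreExtStruct.push e δ'

namespace ExtStruct

variable {B : Type u} [Category.{v} B] [Preadditive B] [HasFiniteBiproducts B] (σ : ExtStruct B)

/-- A sequence `A --x--> X --y--> C` is a conflation if it realizes some `E`-extension. -/
def Conflation {A X C : B} (x : A ⟶ X) (y : X ⟶ C) : Prop :=
  ∃ δ : σ.Ext C A, σ.realize δ x y

/-- `Cone(D₁, D₂)`: objects `X` admitting a conflation `D₁ ↣ D₂ ↠ X`. -/
def Cone (D₁ D₂ : Set B) : Set B :=
  {X | ∃ (A Y : B) (f : A ⟶ Y) (g : Y ⟶ X), A ∈ D₁ ∧ Y ∈ D₂ ∧ σ.Conflation f g}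

/-- `CoCone(D₁, D₂)`: objects `X` admitting a conflation `X ↣ D₁ ↠ D₂`. -/
def CoCone (D₁ D₂ : Set B) : Set B :=
  {X | ∃ (Y C : B) (f : X ⟶ Y) (g : Y ⟶ C), Y ∈ D₁ ∧ C ∈ D₂ ∧ σ.Conflation f g}

/-- `D₁ ∗ D₂`: objects `X` admitting a conflation `D₁ ↣ X ↠ D₂`. -/
def star (D₁ D₂ : Set B) : Set B :=
  {X | ∃ (A C : B) (f : A ⟶ X) (g : X ⟶ C), A ∈ D₁ ∧ C ∈ D₂ ∧ σ.Conflation f g}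

/-- `add(D₁ ∗ D₂)`: direct summands of objects of `D₁ ∗ D₂`. -/
def addStar (D₁ D₂ : Set B) : Set B :=
  {X | ∃ Y ∈ σ.star D₁ D₂, ∃ (s : X ⟶ Y) (r : Y ⟶ X), s ≫ r = 𝟙 X}

/-- An object `P` is projective if `E(P, −) = 0`. -/
def IsProj (P : B) : Prop := ∀ (A : B) (δ : σ.Ext P A), δ = 0

/-- An object `I` is injective if `E(−, I) = 0`. -/
def IsInj (I : B) : Prop := ∀ (C : B) (δ : σ.Ext C I), δ = 0

/-- The class of projective objects. -/
def projs : Set B := {P | σ.IsProj P}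

/-- `B` has enough projectives: every object admits a deflation from a projective. -/
def EnoughProj : Prop :=
  ∀ X : B, ∃ (P K : B) (i : K ⟶ P) (p : P ⟶ X), σ.IsProj P ∧ σ.Conflation i p

/-- `B` has enough injectives: every object admits an inflation into an injective. -/
def EnoughInj : Prop :=
  ∀ X : B, ∃ (I C : B) (i : X ⟶ I) (p : I ⟶ C), σ.IsInj I ∧ σ.Conflation i p

end ExtStruct

/-- A full additive subcategory (given as a class of objects), closed under isomorphisms and
direct summands. -/
structure AddClosed {B : Type u} [Category.{v} B] [Preadditive B] [HasFiniteBiproducts B]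
    (U : Set B) : Prop where
  zero_mem : ∀ Z : B, IsZero Z → Z ∈ U
  biprod_mem : ∀ X Y : B, X ∈ U → Y ∈ U → (X ⊞ Y) ∈ U
  summand_mem : ∀ X Y : B, Y ∈ U → ∀ (s : X ⟶ Y) (r : Y ⟶ X), s ≫ r = 𝟙 X → X ∈ U

namespace ExtStruct

variable {B : Type u} [Category.{v} B] [Preadditive B] [HasFiniteBiproducts B] (σ : ExtStruct B)

/-- A (complete) cotorsion pair `(U, V)` on an extriangulated category. -/
structure IsCotorsionPair (U V : Set B) : Prop where
  addU : AddClosed U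
  addV : AddClosed V
  ext_vanish : ∀ ⦃X : B⦄, X ∈ U → ∀ ⦃Y : B⦄, Y ∈ V → ∀ δ : σ.Ext X Y, δ = 0
  resolve : ∀ X : B, ∃ (V₀ U₀ : B) (f : V₀ ⟶ U₀) (g : U₀ ⟶ X),
      V₀ ∈ V ∧ U₀ ∈ U ∧ σ.Conflation f g
  coresolve : ∀ X : B, ∃ (V₀ U₀ : B) (f : X ⟶ V₀) (g : V₀ ⟶ U₀),
      V₀ ∈ V ∧ U₀ ∈ U ∧ σ.Conflation f g

/-- A twin cotorsion pair `((S,T), (U,V))`. -/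
structure IsTwinCotorsionPair (S T U V : Set B) : Prop where
  fst : σ.IsCotorsionPair S T
  snd : σ.IsCotorsionPair U V
  ext_SV : ∀ ⦃X : B⦄, X ∈ S → ∀ ⦃Y : B⦄, Y ∈ V → ∀ δ : σ.Ext X Y, δ = 0

section Twin

variable (S T U V : Set B)

/-- `B⁺ = Cone(V, W)` for the core `W = T ∩ U` of a twin cotorsion pair. -/
def tPos : Set B := σ.Cone V (T ∩ U)

/-- `B⁻ = CoCone(W, S)` for the core `W = T ∩ U` of a twin cotorsion pair. -/
def tNeg : Set B := σ.CoCone (T ∩ U) S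

/-- The class of objects of the heart `H = B⁺ ∩ B⁻` of a twin cotorsion pair. -/
def tHeartSet : Set B := σ.tPos T U V ∩ σ.tNeg S T U

/-- The heart `H/W` of a twin cotorsion pair, as a full subcategory of the quotient
category `B/W`. -/
abbrev THeart := ObjectProperty.FullSubcategory (fun X : QuotCat (T ∩ U : Set B) => X.as ∈ σ.tHeartSet S T U V)


/-- A *reflection sequence* for `B₀`: a conflation `B₀ ↣ Z ↠ S₀` with `Z ∈ B⁺`, `S₀ ∈ S`,
such that `z^* : E(Z, V₀) → E(B₀, V₀)` is surjective for every `V₀ ∈ V`. -/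
def IsReflectionSeq {B₀ Z S₀ : B} (z : B₀ ⟶ Z) (w : Z ⟶ S₀) : Prop :=
  Z ∈ σ.tPos T U V ∧ S₀ ∈ S ∧ σ.Conflation z w ∧
    ∀ ⦃V₀ : B⦄, V₀ ∈ V → Function.Surjective (fun δ : σ.Ext Z V₀ => σ.pull z δ)

/-- A *coreflection sequence* for `B₀`: a conflation `V₀ ↣ X ↠ B₀` with `X ∈ B⁻`, `V₀ ∈ V`,
such that `x_* : E(S₀, X) → E(S₀, B₀)` is surjective for every `S₀ ∈ S`. -/
def IsCoreflectionSeq {V₀ X B₀ : B} (v : V₀ ⟶ X) (x : X ⟶ B₀) : Prop :=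
  X ∈ σ.tNeg S T U ∧ V₀ ∈ V ∧ σ.Conflation v x ∧
    ∀ ⦃S₀ : B⦄, S₀ ∈ S → Function.Surjective (fun δ : σ.Ext S₀ X => σ.push x δ)

end Twin

section Single

variable (U V : Set B)

/-- `B⁺` for a single cotorsion pair `(U,V)`, with core `W = U ∩ V`. -/
def sPos : Set B := σ.Cone V (U ∩ V)

/-- `B⁻` for a single cotorsion pair `(U,V)`, with core `W = U ∩ V`. -/
def sNeg : Set B := σ.CoCone (U ∩ V) U

/-- The class of objects of the heart of a single cotorsion pair. -/
def sHeartSet : Set B := σ.sPos U V ∩ σ.sNeg U V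

/-- The heart `H/W` of a cotorsion pair `(U,V)`, a full subcategory of `B/W`, `W = U ∩ V`. -/
abbrev SHeart := ObjectProperty.FullSubcategory (fun X : QuotCat (U ∩ V : Set B) => X.as ∈ σ.sHeartSet U V)

/-- The inclusion of the heart into the quotient category `B/W`. -/
abbrev sHeartIncl : σ.SHeart U V ⥤ QuotCat (U ∩ V : Set B) := ObjectProperty.ι _

/-- The kernel `K = add(U ∗ V)` of a cotorsion pair. -/
def kernelSet : Set B := σ.addStar U V

/-- The coheart `C = ⊥₁K` of a cotorsion pair. -/
def coheart : Set B := {X | ∀ ⦃K : B⦄, K ∈ σ.kernelSet U V → ∀ δ : σ.Ext X K, δ = 0}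


/-- An object of the heart determined by an object of `B` lying in `B⁺ ∩ B⁻`. -/
def sHeartObj {X : B} (hX : X ∈ σ.sHeartSet U V) : σ.SHeart U V :=
  ⟨(toQuot (U ∩ V : Set B)).obj X, hX⟩

/-- The image in the heart of a morphism of `B` between objects of `B⁺ ∩ B⁻`. -/
def sHeartHom {X Y : B} (hX : X ∈ σ.sHeartSet U V) (hY : Y ∈ σ.sHeartSet U V) (f : X ⟶ Y) :
    σ.sHeartObj U V hX ⟶ σ.sHeartObj U V hY :=
  ObjectProperty.homMk ((toQuot (U ∩ V : Set B)).map f)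

end Single

end ExtStruct

end ExtCat

section More

variable {B : Type u} [Category.{v} B] [Preadditive B] [HasFiniteBiproducts B]

namespace ExtStruct

variable (σ : ExtStruct B)

/-- `Ω D₀ = CoCone(P, D₀)`, the syzygy class of a class of objects `D₀`. -/
def omegaSet (D₀ : Set B) : Set B := σ.CoCone σ.projs D₀

/-- A choice of iterated syzygies of `X`: `Z 0 = X` and for each `i` there is a conflation
`Z (i+1) ↣ P ↠ Z i` with `P` projective. -/
def SyzygyChain (X : B) (Z : ℕ → B) : Prop :=
  Z 0 = X ∧ ∀ i : ℕ, ∃ (P : B) (f : Z (i + 1) ⟶ P) (g : P ⟶ Z i),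
    σ.IsProj P ∧ σ.Conflation f g

/-- A choice of iterated cosyzygies of `Y`: `Z 0 = Y` and for each `i` there is a conflation
`Z i ↣ I ↠ Z (i+1)` with `I` injective. -/
def CosyzygyChain (Y : B) (Z : ℕ → B) : Prop :=
  Z 0 = Y ∧ ∀ i : ℕ, ∃ (I : B) (f : Z i ⟶ I) (g : I ⟶ Z (i + 1)),
    σ.IsInj I ∧ σ.Conflation f g

/-- Vanishing of the higher extension group `E^{i+1}(X, Y) = E(X, Σ^i Y)`, expressed via
cosyzygy chains.  (`hExtVanish σ X Y 0` is the vanishing of `E(X,Y)` itself.) -/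
def hExtVanish (X Y : B) (i : ℕ) : Prop :=
  ∀ Z : ℕ → B, σ.CosyzygyChain Y Z → ∀ δ : σ.Ext X (Z i), δ = 0

/-- `Σ^j D₀`: the class of `j`-th cosyzygies of objects of `D₀`. -/
def sigmaSet (j : ℕ) (D₀ : Set B) : Set B :=
  {X | ∃ Y ∈ D₀, ∃ Z : ℕ → B, σ.CosyzygyChain Y Z ∧ Z j = X}

/-- An `n`-cluster tilting subcategory of an extriangulated category:
it is functorially finite, and `X ∈ M` iff `E^i(X, M) = 0` for `1 ≤ i ≤ n - 1`,
iff `E^i(M, X) = 0` for `1 ≤ i ≤ n - 1`. -/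
structure IsNClusterTilting (n : ℕ) (M : Set B) : Prop where
  contravariantly_finite : ∀ X : B, ∃ M₀ ∈ M, ∃ f : M₀ ⟶ X,
      ∀ M₁ ∈ M, ∀ g : M₁ ⟶ X, ∃ h : M₁ ⟶ M₀, h ≫ f = g
  covariantly_finite : ∀ X : B, ∃ M₀ ∈ M, ∃ f : X ⟶ M₀,
      ∀ M₁ ∈ M, ∀ g : X ⟶ M₁, ∃ h : M₀ ⟶ M₁, f ≫ h = g
  mem_iff_vanish_left : ∀ X : B,
      X ∈ M ↔ ∀ i : ℕ, i ≤ n - 2 → ∀ Y ∈ M, σ.hExtVanish X Y i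
  mem_iff_vanish_right : ∀ X : B,
      X ∈ M ↔ ∀ i : ℕ, i ≤ n - 2 → ∀ Y ∈ M, σ.hExtVanish Y X i

/-- `mlev σ M k` is the subcategory `M_{k+1}` of the paper: `M_1 = M` and
`M_{ℓ} = Cone(M_{ℓ-1}, M)`. -/
def mlev (M : Set B) : ℕ → Set B
  | 0 => M
  | (k + 1) => σ.Cone (mlev M k) M

end ExtStruct

section Reflectors

variable (W P N : Set B)

/-- The data of a reflection functor `σ⁺` onto the objects of `B⁺` (given by the class `P`),
i.e. a left adjoint of the inclusion of the full subcategory of `B/W` on `P` in the bijection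
formulation: composing with the unit `B → σ⁺B` gives bijections
`(σ⁺X ⟶ Y) ≃ (X ⟶ Y)` for all `Y` lying in `P`. -/
structure ReflectorData where
  σp : QuotCat W ⥤ QuotCat W
  mem : ∀ X : QuotCat W, (σp.obj X).as ∈ P
  unit : 𝟭 (QuotCat W) ⟶ σp
  bij : ∀ (X Y : QuotCat W), Y.as ∈ P →
      Function.Bijective (fun g : (σp.obj X ⟶ Y) => unit.app X ≫ g)

/-- The data of a coreflection functor `σ⁻` onto the objects of `B⁻` (given by the class `N`). -/
structure CoreflectorData where
  σm : QuotCat W ⥤ QuotCat W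
  mem : ∀ X : QuotCat W, (σm.obj X).as ∈ N
  counit : σm ⟶ 𝟭 (QuotCat W)
  bij : ∀ (X Y : QuotCat W), X.as ∈ N →
      Function.Bijective (fun g : (X ⟶ σm.obj Y) => g ≫ counit.app Y)

end Reflectors

namespace ExtStruct

variable (σ : ExtStruct B)

/-- The data of the cohomological functor `H = σ⁻ ∘ σ⁺ ∘ π : B → H` associated to a cotorsion
pair `(U, V)`: reflection and coreflection functors together with a functor `H` to the heart
which is isomorphic to `σ⁻ ∘ σ⁺ ∘ π` after composition with the inclusion of the heart. -/
structure HeartFunctorData (U V : Set B) where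
  refl : ReflectorData (B := B) (U ∩ V) (σ.sPos U V)
  corefl : CoreflectorData (B := B) (U ∩ V) (σ.sNeg U V)
  H : B ⥤ σ.SHeart U V
  iso : (H ⋙ σ.sHeartIncl U V) ≅ (toQuot (U ∩ V : Set B) ⋙ refl.σp ⋙ corefl.σm)

end ExtStruct

section Mod

variable (D : Type u₂) [Category.{v₂} D] [Preadditive D]

/-- A coherent (finitely presented) functor `Dᵒᵖ ⥤ Ab`: one admitting an exact presentation
`Hom(−,X) → Hom(−,Y) → F → 0`. -/
def IsCoherent (F : Dᵒᵖ ⥤ AddCommGrpCat.{v₂}) : Prop :=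
  ∃ (X Y : D) (f : X ⟶ Y) (η : preadditiveYoneda.obj Y ⟶ F),
    (∀ A : D, Function.Surjective (η.app (op A))) ∧
    (∀ (A : D) (g : A ⟶ Y), η.app (op A) g = 0 ↔ ∃ h : A ⟶ X, h ≫ f = g)

/-- `mod D`: the category of coherent functors `Dᵒᵖ ⥤ Ab`. -/
abbrev ModCat := ObjectProperty.FullSubcategory (fun F : Dᵒᵖ ⥤ AddCommGrpCat.{v₂} => IsCoherent D F)

end Mod

/-- The additive quotient `C/P` of the full subcategory of `B` on a class `C₀` of objects by
(the ideal of) morphisms factoring through objects satisfying `P₀`. -/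
abbrev StableCat (C₀ P₀ : Set B) :=
  QuotCat (D := ObjectProperty.FullSubcategory (fun X : B => X ∈ C₀)) {Z | Z.obj ∈ P₀}

end More

/-! Apply (ET4) to the split conflation `A --[-f,1]ᵀ--> D ⊞ A --[1,f]--> D` and to the direct sum
of `D --1--> D --> 0` with `A --x--> B₀ --y--> C`. The composite inflation is `[-f, x]ᵀ`, the
conflation it produces on `D` realizes `f_* δ`, and the restriction to `B₀` of the new morphism
`D ⊞ B₀ ⟶ E₁` is the required `g`. Realizations of `f_* δ` are unique up to an isomorphism of the
middle term, and transporting along it gives the statement for the given `D --d--> E₀ --e--> C`. -/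

namespace PreExtStruct

variable {B : Type u} [Category.{v} B] [Preadditive B] (σ : PreExtStruct B)

@[simp]
lemma push_id {C A : B} (δ : σ.Ext C A) : σ.push (𝟙 A) δ = δ := by
  simp [push]

@[simp]
lemma pull_id {C A : B} (δ : σ.Ext C A) : σ.pull (𝟙 C) δ = δ := by
  simp [pull]

@[simp]
lemma push_push {C A A' A'' : B} (a : A ⟶ A') (a' : A' ⟶ A'') (δ : σ.Ext C A) :
    σ.push a' (σ.push a δ) = σ.push (a ≫ a') δ := by
  simp [push]

@[simp]
lemma pull_pull {C'' C' C A : B} (c : C'' ⟶ C') (c' : C' ⟶ C) (δ : σ.Ext C A) :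
    σ.pull c (σ.pull c' δ) = σ.pull (c ≫ c') δ := by
  simp only [pull, op_comp, Functor.map_comp]
  rfl

lemma push_pull {C' C A A' : B} (c : C' ⟶ C) (a : A ⟶ A') (δ : σ.Ext C A) :
    σ.push a (σ.pull c δ) = σ.pull c (σ.push a δ) :=
  ConcreteCategory.congr_hom (((σ.E.map c.op).naturality a).symm) δ

@[simp]
lemma push_zero {C A A' : B} (a : A ⟶ A') : σ.push a (0 : σ.Ext C A) = 0 := by
  simp [push]

@[simp]
lemma pull_zero {C' C A : B} (c : C' ⟶ C) : σ.pull c (0 : σ.Ext C A) = 0 := by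
  simp [pull]

end PreExtStruct

namespace ExtStruct

variable {B : Type u} [Category.{v} B] [Preadditive B] [HasFiniteBiproducts B] (σ : ExtStruct B)

lemma realize_of_iso {A C X X' : B} {δ : σ.Ext C A} {x : A ⟶ X} {y : X ⟶ C}
    (h : σ.realize δ x y) (b : X ≅ X') {x' : A ⟶ X'} {y' : X' ⟶ C}
    (hx : x ≫ b.hom = x') (hy : b.inv ≫ y = y') : σ.realize δ x' y' := by
  subst hx hy
  exact σ.realize_iso δ x y b h

lemma realize_zero_of_isZero_left {Z : B} (hZ : IsZero Z) (W : B) :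
    σ.realize (0 : σ.Ext W Z) (0 : Z ⟶ W) (𝟙 W) :=
  σ.realize_of_iso (σ.realize_zero Z W)
    { hom := biprod.snd, inv := biprod.inr
      hom_inv_id := biprod.hom_ext _ _ (hZ.eq_of_tgt _ _) (by simp) }
    (by simp) (by simp)

lemma realize_zero_of_isZero_right {Z : B} (hZ : IsZero Z) (W : B) :
    σ.realize (0 : σ.Ext Z W) (𝟙 W) (0 : W ⟶ Z) :=
  σ.realize_of_iso (σ.realize_zero W Z)
    { hom := biprod.fst, inv := biprod.inl
      hom_inv_id := biprod.hom_ext _ _ (by simp) (hZ.eq_of_tgt _ _) }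
    (by simp) (by simp)

lemma exists_comp_eq_of_realize {A X C W : B} {δ : σ.Ext C A} {x : A ⟶ X} {y : X ⟶ C}
    (h : σ.realize δ x y) (t : X ⟶ W) (ht : x ≫ t = 0) :
    ∃ k : C ⟶ W, y ≫ k = t := by
  obtain ⟨Z, hZ⟩ := HasZeroObject.zero (C := B)
  obtain ⟨k, -, hk⟩ := σ.et3 δ 0 x y 0 (𝟙 W) h (σ.realize_zero_of_isZero_left hZ W) 0 t
    (by simp [ht])
  exact ⟨k, by simpa using hk⟩

lemma isIso_of_realize_of_comp_eq {A X C : B} {δ : σ.Ext C A} {x : A ⟶ X} {y : X ⟶ C}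
    (h : σ.realize δ x y) {b : X ⟶ X} (hx : x ≫ b = x) (hy : b ≫ y = y) : IsIso b := by
  obtain ⟨k, hk⟩ := σ.exists_comp_eq_of_realize h (b - 𝟙 X) (by simp [hx])
  -- `b = 𝟙 + n` with `n = y ≫ k` square-zero, so `𝟙 - n` inverts it.
  have hb : b = 𝟙 X + y ≫ k := by rw [hk]; abel
  have hky : (y ≫ k) ≫ y = 0 := by rw [hk, Preadditive.sub_comp, hy, Category.id_comp, sub_self]
  have hn : (y ≫ k) ≫ y ≫ k = 0 := by rw [← Category.assoc, hky, zero_comp]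
  refine ⟨𝟙 X - y ≫ k, ?_, ?_⟩ <;>
    simp only [hb, Preadditive.add_comp, Preadditive.comp_add, Preadditive.comp_sub,
      Preadditive.sub_comp, Category.id_comp, Category.comp_id, hn] <;> abel

lemma realize_comp_hom_of_realize_pull {A X C C' : B} (c : C ≅ C') {δ : σ.Ext C' A}
    {x : A ⟶ X} {y : X ⟶ C} (h : σ.realize (σ.pull c.hom δ) x y) :
    σ.realize δ x (y ≫ c.hom) := by
  obtain ⟨X', x', y', h'⟩ := σ.realize_ex δ
  obtain ⟨b, hxb, hyb⟩ := σ.realize_map _ δ x y x' y' (𝟙 A) c.hom h h' (by simp)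
  obtain ⟨b', hxb', hyb'⟩ := σ.realize_map δ (σ.pull c.hom δ) x' y' x y (𝟙 A) c.inv h' h
    (by simp)
  have : IsIso (b ≫ b') := σ.isIso_of_realize_of_comp_eq h
    (by simp [reassoc_of% hxb, hxb']) (by rw [Category.assoc, ← hyb', ← reassoc_of% hyb]; simp)
  have : IsIso (b' ≫ b) := σ.isIso_of_realize_of_comp_eq h'
    (by simp [reassoc_of% hxb', hxb]) (by rw [Category.assoc, ← hyb, ← reassoc_of% hyb']; simp)
  have : IsSplitMono b :=
    IsSplitMono.mk' ⟨b' ≫ inv (b ≫ b'), by rw [← Category.assoc, IsIso.hom_inv_id]⟩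
  have : Epi b := epi_of_epi b' b
  have : IsIso b := isIso_of_epi_of_isSplitMono b
  exact σ.realize_of_iso h' (asIso b).symm (by simpa using hxb.symm) (by simpa using hyb.symm)

lemma realize_zero_lift_neg_desc {A D : B} (f : A ⟶ D) :
    σ.realize (0 : σ.Ext D A) (biprod.lift (-f) (𝟙 A)) (biprod.desc (𝟙 D) f) :=
  σ.realize_of_iso (σ.realize_zero A D)
    { hom := biprod.desc (biprod.lift (-f) (𝟙 A)) biprod.inl
      inv := biprod.desc biprod.inr (biprod.lift (𝟙 A) f)
      hom_inv_id := by ext <;> simp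
      inv_hom_id := by ext <;> simp }
    (by simp) (by ext <;> simp)

lemma realize_push_inr_biprod_map {A X C : B} {δ : σ.Ext C A} {x : A ⟶ X} {y : X ⟶ C}
    (h : σ.realize δ x y) (W : B) :
    σ.realize (σ.push (biprod.inr : A ⟶ W ⊞ A) δ) (biprod.map (𝟙 W) x) (biprod.snd ≫ y) := by
  obtain ⟨Z, hZ⟩ := HasZeroObject.zero (C := B)
  have hsum := σ.realize_sum 0 δ (𝟙 W) 0 x y (σ.realize_zero_of_isZero_right hZ W) h
  have hsumExt : σ.sumExt (0 : σ.Ext Z W) δ = σ.pull biprod.snd (σ.push biprod.inr δ) := by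
    simp [PreExtStruct.sumExt, PreExtStruct.push_pull]
  rw [hsumExt] at hsum
  simpa using σ.realize_comp_hom_of_realize_pull
    { hom := biprod.snd, inv := biprod.inr
      hom_inv_id := biprod.hom_ext _ _ (hZ.eq_of_tgt _ _) (by simp) }
    hsum

lemma exists_realize_push_and_realize_pull {A B₀ C D : B} {δ : σ.Ext C A} {x : A ⟶ B₀}
    {y : B₀ ⟶ C} (hδ : σ.realize δ x y) (f : A ⟶ D) :
    ∃ (E₁ : B) (d₁ : D ⟶ E₁) (e₁ : E₁ ⟶ C) (g₁ : B₀ ⟶ E₁),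
      σ.realize (σ.push f δ) d₁ e₁ ∧ (x ≫ g₁ = f ≫ d₁ ∧ y = g₁ ≫ e₁) ∧
      σ.realize (σ.pull e₁ δ) (biprod.lift (-f) x) (biprod.desc d₁ g₁) := by
  obtain ⟨E₁, d₁, e₁, h, δ₁, hcomm, he₁, hδ₁, hd₁e₁, -, hpush⟩ :=
    σ.et4 _ _ _ _ _ _ (σ.realize_zero_lift_neg_desc f) (σ.realize_push_inr_biprod_map hδ D)
  have hinl : biprod.inl ≫ h = d₁ := by simpa using biprod.inl ≫= hcomm
  have hinr : x ≫ biprod.inr ≫ h = f ≫ d₁ := by simpa using biprod.inr ≫= hcomm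
  have hδ₁_eq : δ₁ = σ.pull e₁ δ := by
    simpa [PreExtStruct.push_pull] using congrArg (σ.push biprod.snd) hpush
  refine ⟨E₁, d₁, e₁, biprod.inr ≫ h, by simpa using hd₁e₁, ⟨hinr, by simp [he₁]⟩, ?_⟩
  have hlift : biprod.lift (-f) (𝟙 A) ≫ biprod.map (𝟙 D) x = biprod.lift (-f) x := by
    ext <;> simp
  have hdesc : h = biprod.desc d₁ (biprod.inr ≫ h) := by ext <;> simp [hinl]
  rwa [← hδ₁_eq, ← hlift, ← hdesc]

end ExtStruct

/-- Proposition 1.20 / dual of `[NP, Corollary 3.16]`.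
Given an `E`-triangle `A --x--> B₀ --y--> C --δ-->`, a morphism `f : A ⟶ D`, and an
`E`-triangle `D --d--> E₀ --e--> C --f_*δ-->` realizing `f_*δ`, there is a morphism
`g : B₀ ⟶ E₀` such that `(f, g, 𝟙 C)` is a morphism of `E`-triangles, and
`A --[-f,x]ᵀ--> D ⊞ B₀ --[d,g]--> E₀ --e^*δ-->` is an `E`-triangle. -/
theorem statement_0 {B : Type u} [Category.{v} B] [Preadditive B] [HasFiniteBiproducts B]
    (σ : ExtStruct B) {A B₀ C D E₀ : B}
    (δ : σ.Ext C A) (x : A ⟶ B₀) (y : B₀ ⟶ C) (hδ : σ.realize δ x y)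
    (f : A ⟶ D) (d : D ⟶ E₀) (e : E₀ ⟶ C) (hfδ : σ.realize (σ.push f δ) d e) :
    ∃ g : B₀ ⟶ E₀,
      (x ≫ g = f ≫ d ∧ y = g ≫ e) ∧
      σ.realize (σ.pull e δ) (biprod.lift (-f) x) (biprod.desc d g) := by
  obtain ⟨E₁, d₁, e₁, g₁, hd₁e₁, ⟨hx, hy⟩, hcone⟩ :=
    σ.exists_realize_push_and_realize_pull hδ f
  obtain ⟨θ, hd, he⟩ := σ.realize_unique _ d₁ e₁ d e hd₁e₁ hfδ
  refine ⟨g₁ ≫ θ.hom, ⟨by simp [reassoc_of% hx, hd], by simp [hy, he]⟩, ?_⟩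
  rw [← he, ← PreExtStruct.pull_pull] at hcone
  have hdesc : biprod.desc d₁ g₁ ≫ θ.hom = biprod.desc d (g₁ ≫ θ.hom) := by ext <;> simp [hd]
  simpa only [hdesc] using σ.realize_comp_hom_of_realize_pull θ hcone

end ExtriHearts
end

section
/- Let ((S,T),(U,V)) be a twin cotorsion pair on an extriangulated category B. (a) If A ↣ B ↠ U is a conflation with U ∈ U and A ∈ B^-, then B ∈ B^-. (b) If A ↣ B ↠ S is a conflation with S ∈ S and B ∈ B^-, then A ∈ B^-; in particular B^- = CoCone(U, S). -/
namespace ExtriHearts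

open CategoryTheory CategoryTheory.Limits Opposite

attribute [local instance] CategoryTheory.Limits.hasBinaryBiproducts_of_finite_biproducts

universe v u v₂ u₂

/-!
For (b), (ET4) composes the inflation `A ↣ B₀` with a conflation `B₀ ↣ W₀ ↠ S₁` (`W₀` in the
core) into `A ↣ W₀ ↠ E`, where `E` is an extension of `S₁` by `S₀`, hence lies in the
extension-closed class `S`. For (a), let `A ↣ W₀ ↠ S₁` exhibit `A ∈ B⁻`. The inflation
`(f, a) : A ↣ B₀ ⊞ W₀` factors through `A ⊞ W₀` in two ways, as `(f ⊞ 1) ∘ (1, a)` and as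
`(1 ⊞ a) ∘ (f, 1)`, and (ET4) turns these into cones `M`, `M'` of `(f, a)` with conflations
`W₀ ↣ M ↠ U₀` and `B₀ ↣ M' ↠ S₁` (up to zero summands). Cones of an inflation are unique up to
isomorphism, so `M' ≅ M ∈ U` and `B₀ ∈ CoCone(U, S)`.
Finally `CoCone(U, S) ⊆ B⁻`: since `S ⊆ U`, the `(S, T)`-coresolution `X ↣ T₁ ↠ S₁` of any
`X ∈ U` has `T₁ ∈ T ∩ U`, and the argument of (b) applies.
-/

namespace ExtStruct

variable {B : Type u} [Category.{v} B] [Preadditive B] [HasFiniteBiproducts B] (σ : ExtStruct B)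

lemma push_push {C A A' A'' : B} (a : A ⟶ A') (b : A' ⟶ A'') (δ : σ.Ext C A) :
    σ.push b (σ.push a δ) = σ.push (a ≫ b) δ := by
  simp [PreExtStruct.push]

lemma pull_pull {C'' C' C A : B} (c : C'' ⟶ C') (c' : C' ⟶ C) (δ : σ.Ext C A) :
    σ.pull c (σ.pull c' δ) = σ.pull (c ≫ c') δ := by
  simp [PreExtStruct.pull]

lemma push_pull {C' C A A' : B} (a : A ⟶ A') (c : C' ⟶ C) (δ : σ.Ext C A) :
    σ.push a (σ.pull c δ) = σ.pull c (σ.push a δ) := by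
  simp only [PreExtStruct.push, PreExtStruct.pull]
  rw [← ConcreteCategory.comp_apply, ← ConcreteCategory.comp_apply, NatTrans.naturality]

lemma push_id {C A : B} (δ : σ.Ext C A) : σ.push (𝟙 A) δ = δ := by
  simp [PreExtStruct.push]

lemma pull_id {C A : B} (δ : σ.Ext C A) : σ.pull (𝟙 C) δ = δ := by
  simp [PreExtStruct.pull]

lemma push_zero {C A A' : B} (a : A ⟶ A') : σ.push a (0 : σ.Ext C A) = 0 := by
  simp [PreExtStruct.push]

lemma pull_zero {C' C A : B} (c : C' ⟶ C) : σ.pull c (0 : σ.Ext C A) = 0 := by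
  simp [PreExtStruct.pull]

lemma pull_sub {C' C A : B} (c c' : C' ⟶ C) (δ : σ.Ext C A) :
    σ.pull (c - c') δ = σ.pull c δ - σ.pull c' δ := by
  have := σ.additive_snd A
  exact congrArg (fun φ => φ δ) ((σ.E.flip.obj A).map_sub (f := c.op) (g := c'.op))

lemma split_of_realize_zero {A C X : B} {f : A ⟶ X} {g : X ⟶ C}
    (h : σ.realize (0 : σ.Ext C A) f g) :
    (∃ r : X ⟶ A, f ≫ r = 𝟙 A) ∧ ∃ s : C ⟶ X, s ≫ g = 𝟙 C := by
  obtain ⟨b, hb₁, hb₂⟩ := σ.realize_unique 0 f g biprod.inl biprod.snd h (σ.realize_zero A C)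
  refine ⟨⟨b.hom ≫ biprod.fst, by simp [reassoc_of% hb₁]⟩, biprod.inr ≫ b.inv, ?_⟩
  rw [Category.assoc, ← hb₂, b.inv_hom_id_assoc, biprod.inr_snd]

lemma exists_realize_zero_id (A : B) :
    ∃ (Z : B) (z : A ⟶ Z), IsZero Z ∧ σ.realize (0 : σ.Ext Z A) (𝟙 A) z := by
  obtain ⟨Z, hZ⟩ := HasZeroObject.zero (C := B)
  let b : A ⊞ Z ≅ A := ⟨biprod.fst, biprod.inl, biprod.hom_ext' _ _ (by simp) (hZ.eq_of_src _ _),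
    by simp⟩
  refine ⟨Z, biprod.inl ≫ biprod.snd, hZ, ?_⟩
  simpa [b] using σ.realize_iso 0 biprod.inl biprod.snd b (σ.realize_zero A Z)

lemma realize_zero_lift_id_left {A D : B} (a : A ⟶ D) :
    σ.realize (0 : σ.Ext D A) (biprod.lift (𝟙 A) a) (biprod.snd - biprod.fst ≫ a) := by
  let u : A ⊞ D ≅ A ⊞ D :=
    ⟨𝟙 _ + biprod.fst ≫ a ≫ biprod.inr, 𝟙 _ - biprod.fst ≫ a ≫ biprod.inr, by simp, by simp⟩
  convert σ.realize_iso 0 biprod.inl biprod.snd u (σ.realize_zero A D) using 1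
  · ext <;> simp [u]
  · simp [u]

lemma realize_zero_lift_id_right {A C : B} (f : A ⟶ C) :
    σ.realize (0 : σ.Ext C A) (biprod.lift f (𝟙 A)) (biprod.fst - biprod.snd ≫ f) := by
  let v : A ⊞ C ≅ C ⊞ A :=
    ⟨biprod.lift (biprod.fst ≫ f + biprod.snd) biprod.fst,
      biprod.lift biprod.snd (biprod.fst - biprod.snd ≫ f), by ext <;> simp, by ext <;> simp⟩
  convert σ.realize_iso 0 biprod.inl biprod.snd v (σ.realize_zero A C) using 1
  · ext <;> simp [v]
  · simp [v]

lemma exists_comp_eq_of_pull_eq_zero {A M X Z : B} {ε : σ.Ext X A} {m : A ⟶ M} {q : M ⟶ X}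
    (h : σ.realize ε m q) (t : Z ⟶ X) (ht : σ.pull t ε = 0) : ∃ u : Z ⟶ M, u ≫ q = t := by
  obtain ⟨b, -, hb⟩ := σ.realize_map 0 ε biprod.inl biprod.snd m q (𝟙 A) t
    (σ.realize_zero A Z) h (by rw [ht, push_zero])
  exact ⟨biprod.inr ≫ b, by rw [Category.assoc, ← hb, biprod.inr_snd_assoc]⟩

lemma exists_pull_eq_of_pull_eq_zero {X Y Z Q : B} {θ : σ.Ext Z X} {x : X ⟶ Y} {y : Y ⟶ Z}
    (hθ : σ.realize θ x y) (δ : σ.Ext Y Q) (hδ : σ.pull x δ = 0) :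
    ∃ ε : σ.Ext Z Q, σ.pull y ε = δ := by
  obtain ⟨M, m, e, hM⟩ := σ.realize_ex δ
  obtain ⟨_, _, _, _, δ'', -, -, -, hsplit, -, hpull⟩ := σ.et4op δ m e θ x y hM hθ
  rw [hδ] at hsplit
  obtain ⟨⟨r, hr⟩, -⟩ := σ.split_of_realize_zero hsplit
  exact ⟨σ.push r δ'', by rw [← push_pull, hpull, push_push, hr, push_id]⟩

lemma isIso_of_comp_eq_of_pull_eq {A M X : B} {ε : σ.Ext X A} {m : A ⟶ M} {q : M ⟶ X}
    (h : σ.realize ε m q) (e : X ⟶ X) (hqe : q ≫ e = q) (hεe : σ.pull e ε = ε) : IsIso e := by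
  obtain ⟨u, hu⟩ := σ.exists_comp_eq_of_pull_eq_zero h (e - 𝟙 X)
    (by rw [pull_sub, hεe, pull_id, sub_self])
  -- `e - 1 = u ≫ q` is square-zero because `q ≫ (e - 1) = 0`.
  let n : End X := u ≫ q
  have hnil : IsNilpotent n := ⟨2, by
    rw [pow_two, End.mul_def]
    change (u ≫ q) ≫ u ≫ q = 0
    rw [Category.assoc, hu, Preadditive.comp_sub, hqe, Category.comp_id, sub_self,
      Limits.comp_zero]⟩
  rw [← isUnit_iff_isIso]
  simpa [n, hu] using hnil.isUnit_one_add

lemma cone_unique {A M X X' : B} {ε : σ.Ext X A} {ε' : σ.Ext X' A} {m : A ⟶ M}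
    {q : M ⟶ X} {q' : M ⟶ X'} (h : σ.realize ε m q) (h' : σ.realize ε' m q') :
    Nonempty (X ≅ X') := by
  obtain ⟨c, hc, hqc⟩ := σ.et3 ε ε' m q m q' h h' (𝟙 A) (𝟙 M) (by simp)
  obtain ⟨c', hc', hqc'⟩ := σ.et3 ε' ε m q' m q h' h (𝟙 A) (𝟙 M) (by simp)
  rw [push_id] at hc hc'
  rw [Category.id_comp] at hqc hqc'
  have : IsIso (c ≫ c') := σ.isIso_of_comp_eq_of_pull_eq h _
    (by rw [reassoc_of% hqc, hqc']) (by rw [← pull_pull, ← hc', ← hc])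
  have : IsIso (c' ≫ c) := σ.isIso_of_comp_eq_of_pull_eq h' _
    (by rw [reassoc_of% hqc', hqc]) (by rw [← pull_pull, ← hc, ← hc'])
  have : Mono c := mono_of_mono c c'
  have : IsSplitEpi c := IsSplitEpi.mk' ⟨inv (c' ≫ c) ≫ c', by simp⟩
  have := isIso_of_mono_of_isSplitEpi c
  exact ⟨asIso c⟩

lemma exists_cone_lift_of_realize_left {A B₀ C W : B} {θ : σ.Ext C A} {f : A ⟶ B₀}
    {g : B₀ ⟶ C} (hθ : σ.realize θ f g) (a : A ⟶ W) :
    ∃ (E Z : B) (p : B₀ ⊞ W ⟶ E) (i : W ⟶ E) (j : E ⟶ C ⊞ Z),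
      IsZero Z ∧ σ.Conflation (biprod.lift f a) p ∧ σ.Conflation i j := by
  obtain ⟨Z, z, hZ, hz⟩ := σ.exists_realize_zero_id W
  -- `(f, a)` factors as the split inflation `(1, a)` followed by `f ⊞ 1`.
  obtain ⟨E, i, j, p, δ, -, -, hp, hij, -, -⟩ := σ.et4 0 _ _ _ _ _
    (σ.realize_zero_lift_id_left a) (σ.realize_sum θ 0 f g (𝟙 W) z hθ hz)
  exact ⟨E, Z, p, i, j, hZ, ⟨δ, by convert hp using 1; ext <;> simp⟩, _, hij⟩

lemma exists_cone_lift_of_realize_right {A W S₁ B₀ : B} {η : σ.Ext S₁ A} {a : A ⟶ W}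
    {a' : W ⟶ S₁} (hη : σ.realize η a a') (f : A ⟶ B₀) :
    ∃ (E Z : B) (p : B₀ ⊞ W ⟶ E) (i : B₀ ⟶ E) (j : E ⟶ Z ⊞ S₁),
      IsZero Z ∧ σ.Conflation (biprod.lift f a) p ∧ σ.Conflation i j := by
  obtain ⟨Z, z, hZ, hz⟩ := σ.exists_realize_zero_id B₀
  -- `(f, a)` factors as the split inflation `(f, 1)` followed by `1 ⊞ a`.
  obtain ⟨E, i, j, p, δ, -, -, hp, hij, -, -⟩ := σ.et4 0 _ _ _ _ _
    (σ.realize_zero_lift_id_right f) (σ.realize_sum 0 η (𝟙 B₀) z a a' hz hη)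
  exact ⟨E, Z, p, i, j, hZ, ⟨δ, by convert hp using 1; ext <;> simp⟩, _, hij⟩

variable {σ}

lemma coCone_mono {X X' Y Y' : Set B} (hX : X ⊆ X') (hY : Y ⊆ Y') :
    σ.CoCone X Y ⊆ σ.CoCone X' Y' :=
  fun _ ⟨M, C, f, g, hM, hC, hfg⟩ => ⟨M, C, f, g, hX hM, hY hC, hfg⟩

lemma coCone_coCone_subset {X Y : Set B} (hY : σ.star Y Y ⊆ Y) :
    σ.CoCone (σ.CoCone X Y) Y ⊆ σ.CoCone X Y := by
  rintro A ⟨B₀, C, f, g, ⟨M, C', x, y, hM, hC', ε, hε⟩, hC, δ, hδ⟩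
  obtain ⟨E₀, d, e, h', δ'', -, -, hr, hr', -, -⟩ := σ.et4 δ f g ε x y hδ hε
  exact ⟨M, E₀, f ≫ x, h', hM, hY ⟨C, C', d, e, hC, hC', _, hr'⟩, δ'', hr⟩

lemma star_coCone_subset {X Y : Set B} (hX : AddClosed X) (hXX : σ.star X X ⊆ X)
    (hY : AddClosed Y) : σ.star (σ.CoCone X Y) X ⊆ σ.CoCone X Y := by
  rintro B₀ ⟨A, C, f, g, ⟨W, S₁, a, a', hW, hS₁, η, hη⟩, hC, θ, hθ⟩
  obtain ⟨E, Z, p, i, j, hZ, ⟨_, hp⟩, hij⟩ := σ.exists_cone_lift_of_realize_left hθ a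
  obtain ⟨E', Z', p', i', j', hZ', ⟨_, hp'⟩, hij'⟩ := σ.exists_cone_lift_of_realize_right hη f
  obtain ⟨φ⟩ := σ.cone_unique hp' hp
  have hE : E ∈ X := hXX ⟨W, C ⊞ Z, i, j, hW, hX.biprod_mem _ _ hC (hX.zero_mem Z hZ), hij⟩
  exact ⟨E', Z' ⊞ S₁, i', j', hX.summand_mem E' E hE φ.hom φ.inv φ.hom_inv_id,
    hY.biprod_mem _ _ (hY.zero_mem Z' hZ') hS₁, hij'⟩

variable {S T U V : Set B}

lemma IsCotorsionPair.mem_left_of_ext_eq_zero (cp : σ.IsCotorsionPair U V) {X : B}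
    (h : ∀ Y ∈ V, ∀ δ : σ.Ext X Y, δ = 0) : X ∈ U := by
  obtain ⟨Y, U₀, f, g, hY, hU₀, δ, hδ⟩ := cp.resolve X
  rw [h Y hY δ] at hδ
  obtain ⟨-, s, hs⟩ := σ.split_of_realize_zero hδ
  exact cp.addU.summand_mem X U₀ hU₀ s g hs

lemma IsCotorsionPair.star_left_subset (cp : σ.IsCotorsionPair U V) : σ.star U U ⊆ U := by
  rintro Y ⟨X, Z, x, y, hX, hZ, θ, hθ⟩
  refine cp.mem_left_of_ext_eq_zero fun V₀ hV₀ δ => ?_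
  obtain ⟨ε, rfl⟩ := σ.exists_pull_eq_of_pull_eq_zero hθ δ (cp.ext_vanish hX hV₀ _)
  rw [cp.ext_vanish hZ hV₀ ε, pull_zero]

lemma IsTwinCotorsionPair.fst_left_subset_snd_left (twin : σ.IsTwinCotorsionPair S T U V) :
    S ⊆ U :=
  fun _ hX => twin.snd.mem_left_of_ext_eq_zero fun _ hV δ => twin.ext_SV hX hV δ

lemma IsTwinCotorsionPair.coCone_subset_tNeg (twin : σ.IsTwinCotorsionPair S T U V) :
    σ.CoCone U S ⊆ σ.tNeg S T U := by
  have hU : U ⊆ σ.tNeg S T U := fun X hX => by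
    obtain ⟨T₁, S₁, x, y, hT₁, hS₁, hxy⟩ := twin.fst.coresolve X
    have hT₁U : T₁ ∈ U := twin.snd.star_left_subset
      ⟨X, S₁, x, y, hX, twin.fst_left_subset_snd_left hS₁, hxy⟩
    exact ⟨T₁, S₁, x, y, ⟨hT₁, hT₁U⟩, hS₁, hxy⟩
  exact (coCone_mono hU subset_rfl).trans (coCone_coCone_subset twin.fst.star_left_subset)

end ExtStruct

/-- Lemma 2.9 / `CP1`. Let `((S,T),(U,V))` be a twin cotorsion pair.
(a) If `A ↣ B₀ ↠ U₀` is a conflation with `U₀ ∈ U` and `A ∈ B⁻`, then `B₀ ∈ B⁻`.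
(b) If `A ↣ B₀ ↠ S₀` is a conflation with `S₀ ∈ S` and `B₀ ∈ B⁻`, then `A ∈ B⁻`;
in particular `B⁻ = CoCone(U, S)`. -/
theorem statement_1 {B : Type u} [Category.{v} B] [Preadditive B] [HasFiniteBiproducts B]
    (σ : ExtStruct B) {S T U V : Set B} (twin : σ.IsTwinCotorsionPair S T U V) :
    (∀ ⦃A B₀ U₀ : B⦄ (f : A ⟶ B₀) (g : B₀ ⟶ U₀), σ.Conflation f g → U₀ ∈ U →
        A ∈ σ.tNeg S T U → B₀ ∈ σ.tNeg S T U) ∧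
    (∀ ⦃A B₀ S₀ : B⦄ (f : A ⟶ B₀) (g : B₀ ⟶ S₀), σ.Conflation f g → S₀ ∈ S →
        B₀ ∈ σ.tNeg S T U → A ∈ σ.tNeg S T U) ∧
    σ.tNeg S T U = σ.CoCone U S := by
  have hNeg : σ.tNeg S T U = σ.CoCone U S :=
    (ExtStruct.coCone_mono Set.inter_subset_right subset_rfl).antisymm twin.coCone_subset_tNeg
  refine ⟨fun A B₀ U₀ f g hfg hU₀ hA => ?_, fun A B₀ S₀ f g hfg hS₀ hB₀ => ?_, hNeg⟩
  · rw [hNeg] at hA ⊢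
    exact ExtStruct.star_coCone_subset twin.snd.addU twin.snd.star_left_subset twin.fst.addU
      ⟨A, U₀, f, g, hA, hU₀, hfg⟩
  · exact ExtStruct.coCone_coCone_subset twin.fst.star_left_subset ⟨B₀, S₀, f, g, hB₀, hS₀, hfg⟩

end ExtriHearts
end
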